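/- arXiv:1502.06089 — 5 statements merged into one kernel-verified Lean document; each statement's English description precedes it below -/
import Mathlib

section
/- Let G be an n×n real matrix (n ≥ 1) with nonnegative off-diagonal entries (an ML-matrix), and suppose G is irreducible, i.e. for some (equivalently, every) τ > max_i |G_{ii}| the nonnegative matrix G + τI is irreducible, meaning that for every pair of indices i, j there exists a natural number k ≥ 1 with ((G + τI)^k)_{ij} > 0. Then there exists exactly one vector μ ∈ ℝⁿ with all entries strictly positive and ∑_i μ_i = 1 such that Gμ − (eᵀGμ)μ = 0, where e = (1,…,1)ᵀ; that is, μ is the unique strictly positive normalized fixed point of the proportion equation dp/dt = Gp − (eᵀGp)p. -/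
open Finset Matrix

section helpers
variable {n : ℕ}

lemma pow_entry_nonneg' (A : Matrix (Fin n) (Fin n) ℝ) (hA : ∀ i j, 0 ≤ A i j) :
    ∀ (k : ℕ) (i j : Fin n), 0 ≤ (A ^ k) i j := by
  intro k
  induction k with
  | zero =>
    intro i j
    simp only [pow_zero, Matrix.one_apply]
    split <;> norm_num
  | succ k ih =>
    intro i j
    rw [pow_succ, Matrix.mul_apply]
    exact Finset.sum_nonneg fun l _ => mul_nonneg (ih i l) (hA l j)

lemma onePow_ge_pow' (A : Matrix (Fin n) (Fin n) ℝ) (hA : ∀ i j, 0 ≤ A i j) :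
    ∀ (m k : ℕ), k ≤ m → ∀ i j, (A ^ k) i j ≤ ((1 + A) ^ m) i j := by
  have h1A : ∀ i j, 0 ≤ (1 + A) i j := by
    intro i j
    simp only [Matrix.add_apply, Matrix.one_apply]
    split <;> [linarith [hA i j]; simpa using hA i j]
  intro m
  induction m with
  | zero =>
    intro k hk i j
    interval_cases k
    simp
  | succ m ih =>
    intro k hk i j
    have expand : ((1 + A) ^ (m+1)) i j = ((1 + A) ^ m) i j + ((1 + A) ^ m * A) i j := by
      rw [pow_succ, mul_add, mul_one, Matrix.add_apply]
    rcases Nat.lt_or_ge k (m+1) with h | h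
    · have hkm : k ≤ m := by omega
      have : 0 ≤ ((1 + A) ^ m * A) i j := by
        rw [Matrix.mul_apply]
        exact Finset.sum_nonneg fun l _ =>
          mul_nonneg (pow_entry_nonneg' (1+A) h1A m i l) (hA l j)
      calc (A ^ k) i j ≤ ((1 + A) ^ m) i j := ih k hkm i j
        _ ≤ _ := by rw [expand]; linarith
    · have hk1 : k = m + 1 := by omega
      subst hk1
      have h2 : (A ^ (m+1)) i j ≤ ((1 + A) ^ m * A) i j := by
        rw [pow_succ, Matrix.mul_apply, Matrix.mul_apply]
        exact Finset.sum_le_sum fun l _ =>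
          mul_le_mul_of_nonneg_right (ih m le_rfl i l) (hA l j)
      have h3 : 0 ≤ ((1 + A) ^ m) i j := pow_entry_nonneg' (1+A) h1A m i j
      rw [expand]; linarith

lemma eig_onePow' (A : Matrix (Fin n) (Fin n) ℝ) (z : Fin n → ℝ) (lam : ℝ)
    (h : A.mulVec z = lam • z) (m : ℕ) :
    ((1 + A) ^ m).mulVec z = (1 + lam) ^ m • z := by
  induction m with
  | zero => simp
  | succ m ih =>
    rw [pow_succ, ← Matrix.mulVec_mulVec, Matrix.add_mulVec, Matrix.one_mulVec, h]
    have e : z + lam • z = (1 + lam) • z := by rw [add_smul, one_smul]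
    rw [e, Matrix.mulVec_smul, ih, smul_smul, ← pow_succ']

lemma mulVec_pos' (P : Matrix (Fin n) (Fin n) ℝ) (hP : ∀ i j, 0 < P i j)
    (v : Fin n → ℝ) (hv : ∀ j, 0 ≤ v j) (j0 : Fin n) (hj0 : 0 < v j0) (i : Fin n) :
    0 < P.mulVec v i := by
  rw [Matrix.mulVec, dotProduct]
  exact Finset.sum_pos' (fun j _ => mul_nonneg (hP i j).le (hv j))
    ⟨j0, Finset.mem_univ _, mul_pos (hP i j0) hj0⟩

lemma continuousOn_inf'' {X ι : Type*} [TopologicalSpace X] {T : Set X}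
    {s : Finset ι} (hs : s.Nonempty) {f : ι → X → ℝ}
    (hf : ∀ i ∈ s, ContinuousOn (f i) T) :
    ContinuousOn (fun x => s.inf' hs fun i => f i x) T := by
  induction s using Finset.cons_induction with
  | empty => exact absurd hs (by simp)
  | cons a s ha ih =>
    rcases s.eq_empty_or_nonempty with rfl | hs'
    · simpa using hf a (by simp)
    · have e : (fun x => (Finset.cons a s ha).inf' hs fun i => f i x)
           = fun x => (f a x) ⊓ (s.inf' hs' fun i => f i x) := by
        funext x
        rw [Finset.inf'_cons]
      rw [e]
      exact (hf a (by simp)).inf (ih hs' fun i hi => hf i (by simp [hi]))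

end helpers

/-- Let `G` be an `n × n` real matrix (`n ≥ 1`) with nonnegative
off-diagonal entries (an ML-matrix), and suppose `G` is irreducible: for every
`τ > max_i |G i i|` (equivalently, some such `τ`) and every pair of indices `i j`
there is `k ≥ 1` with `((G + τ•I)^k) i j > 0`.  Then there is exactly one vector
`μ ∈ ℝⁿ` with strictly positive entries summing to `1` such that
`Gμ − (eᵀGμ)μ = 0`, i.e. `μ` is the unique strictly positive normalized fixed
point of the proportion equation `dp/dt = Gp − (eᵀGp)p`. -/
theorem stmt0 (n : ℕ) (hn : 1 ≤ n) (G : Matrix (Fin n) (Fin n) ℝ)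
    (hML : ∀ i j : Fin n, i ≠ j → 0 ≤ G i j)
    (hirr : ∀ τ : ℝ, (∀ i : Fin n, |G i i| < τ) →
      ∀ i j : Fin n, ∃ k : ℕ, 1 ≤ k ∧ 0 < ((G + τ • (1 : Matrix (Fin n) (Fin n) ℝ)) ^ k) i j) :
    ∃! μ : Fin n → ℝ, (∀ i, 0 < μ i) ∧ (∑ i, μ i) = 1 ∧
      G.mulVec μ - (∑ i, G.mulVec μ i) • μ = 0 := by
  have hne : (Finset.univ : Finset (Fin n)).Nonempty := ⟨⟨0, hn⟩, Finset.mem_univ _⟩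
  -- choose τ
  set τ : ℝ := (Finset.univ.sup' hne fun i => |G i i|) + 1 with hτdef
  have hτ : ∀ i, |G i i| < τ := by
    intro i
    have h1 : |G i i| ≤ Finset.univ.sup' hne fun i => |G i i| :=
      Finset.le_sup' (fun i => |G i i|) (Finset.mem_univ i)
    rw [hτdef]; linarith
  set A := G + τ • (1 : Matrix (Fin n) (Fin n) ℝ) with hAdef
  have hAmul : ∀ v : Fin n → ℝ, A.mulVec v = G.mulVec v + τ • v := by
    intro v
    rw [hAdef, Matrix.add_mulVec, Matrix.smul_mulVec, Matrix.one_mulVec]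
  have hA0 : ∀ i j, 0 ≤ A i j := by
    intro i j
    by_cases h : i = j
    · subst h
      have : A i i = G i i + τ := by
        simp [hAdef, Matrix.one_apply]
      rw [this]
      have := hτ i
      have := neg_abs_le (G i i)
      linarith
    · have : A i j = G i j := by simp [hAdef, Matrix.one_apply, h]
      rw [this]; exact hML i j h
  -- choose m and P
  obtain ⟨k, hk⟩ : ∃ k : Fin n × Fin n → ℕ, ∀ p, 0 < (A ^ (k p)) p.1 p.2 := by
    choose k _ hk2 using fun p : Fin n × Fin n => hirr τ hτ p.1 p.2
    exact ⟨k, hk2⟩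
  set m : ℕ := Finset.univ.sup k with hm
  set P := (1 + A) ^ m with hPdef
  have hP : ∀ i j, 0 < P i j := by
    intro i j
    have hkm : k (i, j) ≤ m := Finset.le_sup (Finset.mem_univ _)
    exact lt_of_lt_of_le (hk (i, j)) (onePow_ge_pow' A hA0 m _ hkm i j)
  -- positive entry from simplex
  have hsimplex_pos : ∀ s ∈ stdSimplex ℝ (Fin n), ∃ j0, 0 < s j0 := by
    intro s hs
    by_contra h
    push_neg at h
    have : ∑ j, s j = 0 :=
      Finset.sum_eq_zero fun j _ => le_antisymm (h j) (hs.1 j)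
    rw [hs.2] at this
    norm_num at this
  -- the compact set T
  set S := stdSimplex ℝ (Fin n) with hSdef
  have hScomp : IsCompact S := isCompact_stdSimplex _ _
  have hSne : S.Nonempty := by
    refine ⟨fun _ => (n : ℝ)⁻¹, fun i => by positivity, ?_⟩
    have hn0 : (n : ℝ) ≠ 0 := by positivity
    simp only [Finset.sum_const, Finset.card_univ, Fintype.card_fin, nsmul_eq_mul]
    exact mul_inv_cancel₀ hn0
  have hcont : Continuous fun v : Fin n → ℝ => P.mulVec v :=
    (Matrix.mulVecLin P).continuous_of_finiteDimensional
  set T := (fun v => P.mulVec v) '' S with hTdef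
  have hTcomp : IsCompact T := hScomp.image hcont
  have hTne : T.Nonempty := hSne.image _
  have hTpos : ∀ x ∈ T, ∀ i, 0 < x i := by
    rintro x ⟨s, hs, rfl⟩ i
    obtain ⟨j0, hj0⟩ := hsimplex_pos s hs
    exact mulVec_pos' P hP s hs.1 j0 hj0 i
  -- the Collatz–Wielandt function
  set g : (Fin n → ℝ) → ℝ := fun x => Finset.univ.inf' hne fun i => A.mulVec x i / x i
    with hgdef
  have hgcont : ContinuousOn g T := by
    apply continuousOn_inf'' hne
    intro i _
    apply ContinuousOn.div
    · exact (((continuous_apply i).comp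
        ((Matrix.mulVecLin A).continuous_of_finiteDimensional))).continuousOn
    · exact (continuous_apply i).continuousOn
    · exact fun x hx => (hTpos x hx i).ne'
  obtain ⟨xs, hxsT, hmax⟩ := hTcomp.exists_isMaxOn hTne hgcont
  set ρ := g xs with hρdef
  have hxs_pos : ∀ i, 0 < xs i := hTpos xs hxsT
  have hge : ∀ i, ρ * xs i ≤ A.mulVec xs i := by
    intro i
    have h1 : ρ ≤ A.mulVec xs i / xs i := Finset.inf'_le _ (Finset.mem_univ i)
    exact (le_div_iff₀ (hxs_pos i)).mp h1
  -- the eigen equation at the maximizer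
  have heig : A.mulVec xs = ρ • xs := by
    by_contra hcontra
    set z := A.mulVec xs - ρ • xs with hzdef
    have hz0 : ∀ i, 0 ≤ z i := by
      intro i
      have : z i = A.mulVec xs i - ρ * xs i := by simp [hzdef]
      rw [this]; linarith [hge i]
    obtain ⟨j0, hj0⟩ : ∃ j0, 0 < z j0 := by
      by_contra h
      push_neg at h
      apply hcontra
      funext i
      have : z i = 0 := le_antisymm (h i) (hz0 i)
      have : A.mulVec xs i - ρ * xs i = 0 := by
        simpa [hzdef] using this
      simp only [Pi.smul_apply, smul_eq_mul]
      linarith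
    have hPz : ∀ i, 0 < P.mulVec z i := mulVec_pos' P hP z hz0 j0 hj0
    have hcomm : A * P = P * A := by
      rw [hPdef]
      exact (((Commute.one_right A).add_right (Commute.refl A)).pow_right m).eq
    set y := P.mulVec xs with hydef
    have hy_pos : ∀ i, 0 < y i :=
      mulVec_pos' P hP xs (fun i => (hxs_pos i).le) ⟨0, hn⟩ (hxs_pos _)
    have hy : A.mulVec y = P.mulVec z + ρ • y := by
      have e1 : A.mulVec (P.mulVec xs) = P.mulVec (A.mulVec xs) := by
        rw [Matrix.mulVec_mulVec, Matrix.mulVec_mulVec, hcomm]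
      have e2 : A.mulVec xs = z + ρ • xs := by
        rw [hzdef]; abel
      rw [hydef, e1, e2, Matrix.mulVec_add, Matrix.mulVec_smul]
    set σ := ∑ i, xs i with hσdef
    have hσpos : 0 < σ := Finset.sum_pos (fun i _ => hxs_pos i) hne
    set s' := σ⁻¹ • xs with hs'def
    have hs'S : s' ∈ S := by
      constructor
      · intro i
        have := hxs_pos i
        have := hσpos
        have : 0 ≤ σ⁻¹ * xs i := by positivity
        simpa [hs'def] using this
      · have : ∑ i, σ⁻¹ * xs i = σ⁻¹ * σ := by
          rw [← Finset.mul_sum]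
        simp only [hs'def, Pi.smul_apply, smul_eq_mul]
        rw [this, inv_mul_cancel₀ hσpos.ne']
    set y' := P.mulVec s' with hy'def
    have hy'T : y' ∈ T := ⟨s', hs'S, rfl⟩
    have hy'e : y' = σ⁻¹ • y := by
      rw [hy'def, hs'def, Matrix.mulVec_smul, hydef]
    have hy'pos : ∀ i, 0 < y' i := hTpos y' hy'T
    have hgy' : ρ < g y' := by
      rw [hgdef]
      rw [Finset.lt_inf'_iff]
      intro i _
      rw [lt_div_iff₀ (hy'pos i)]
      have e1 : A.mulVec y' i = σ⁻¹ * (P.mulVec z i + ρ * y i) := by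
        rw [hy'e, Matrix.mulVec_smul]
        have := congrFun hy i
        simp only [Pi.smul_apply, smul_eq_mul, Pi.add_apply] at this ⊢
        rw [this]
      have e2 : y' i = σ⁻¹ * y i := by
        rw [hy'e]; simp
      rw [e1, e2]
      have h1 : 0 < P.mulVec z i := hPz i
      have h2 : 0 < σ⁻¹ := by positivity
      nlinarith [hy_pos i]
    have := hmax hy'T
    rw [← hρdef] at this
    exact absurd this (not_le.mpr hgy')
  -- construct the normalized eigenvector μ0
  set σ := ∑ i, xs i with hσdef
  have hσpos : 0 < σ := Finset.sum_pos (fun i _ => hxs_pos i) hne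
  set μ0 := σ⁻¹ • xs with hμ0def
  have hμ0pos : ∀ i, 0 < μ0 i := by
    intro i
    have h1 := hxs_pos i
    have : 0 < σ⁻¹ * xs i := by positivity
    simpa [hμ0def] using this
  have hμ0sum : ∑ i, μ0 i = 1 := by
    simp only [hμ0def, Pi.smul_apply, smul_eq_mul]
    rw [← Finset.mul_sum, ← hσdef, inv_mul_cancel₀ hσpos.ne']
  have hμ0eig : A.mulVec μ0 = ρ • μ0 := by
    rw [hμ0def, Matrix.mulVec_smul, heig, smul_comm]
  -- translation between the proportion equation and eigenvectors of A
  have eig_of_prop : ∀ v : Fin n → ℝ,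
      G.mulVec v - (∑ i, G.mulVec v i) • v = 0 →
      A.mulVec v = ((∑ i, G.mulVec v i) + τ) • v := by
    intro v hE
    set c := ∑ i, G.mulVec v i with hc
    have h1 : G.mulVec v = c • v := sub_eq_zero.mp hE
    rw [hAmul, h1, ← add_smul]
  have prop_of_eig : ∀ (v : Fin n → ℝ) (lam : ℝ), (∑ i, v i) = 1 →
      A.mulVec v = lam • v →
      G.mulVec v - (∑ i, G.mulVec v i) • v = 0 := by
    intro v lam hs hE
    have h1 : G.mulVec v + τ • v = lam • v := by rw [← hAmul, hE]
    have hG : G.mulVec v = (lam - τ) • v := by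
      rw [sub_smul, eq_sub_iff_add_eq]; exact h1
    rw [hG]
    have h2 : ∑ i, ((lam - τ) • v) i = lam - τ := by
      simp only [Pi.smul_apply, smul_eq_mul]
      rw [← Finset.mul_sum, hs, mul_one]
    rw [h2, sub_self]
  -- eigenvalue comparison for positive eigenvectors
  have cmp : ∀ (a b : Fin n → ℝ) (la lb : ℝ), (∀ i, 0 < a i) → (∀ i, 0 < b i) →
      A.mulVec a = la • a → A.mulVec b = lb • b → la ≤ lb := by
    intro a b la lb ha hb hea heb
    obtain ⟨i0, _, hi0⟩ := Finset.exists_mem_eq_sup' hne (fun i => a i / b i)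
    set t := Finset.univ.sup' hne fun i => a i / b i with htdef
    have hab : ∀ j, a j ≤ t * b j := by
      intro j
      have h1 : a j / b j ≤ t := Finset.le_sup' (fun i => a i / b i) (Finset.mem_univ j)
      exact (div_le_iff₀ (hb j)).mp h1
    have hti0 : t * b i0 = a i0 := by
      rw [hi0]; exact div_mul_cancel₀ _ (hb i0).ne'
    have h1 : la * a i0 ≤ lb * a i0 := by
      have e1 : la * a i0 = A.mulVec a i0 := by rw [hea]; simp
      have e2 : A.mulVec b i0 = lb * b i0 := by rw [heb]; simp
      have c1 : A.mulVec a i0 ≤ t * A.mulVec b i0 := by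
        simp only [Matrix.mulVec, dotProduct]
        rw [Finset.mul_sum]
        refine Finset.sum_le_sum fun j _ => ?_
        calc A i0 j * a j ≤ A i0 j * (t * b j) :=
              mul_le_mul_of_nonneg_left (hab j) (hA0 i0 j)
          _ = t * (A i0 j * b j) := by ring
      rw [e1]
      calc A.mulVec a i0 ≤ t * (lb * b i0) := by rw [← e2]; exact c1
        _ = lb * (t * b i0) := by ring
        _ = lb * a i0 := by rw [hti0]
    exact le_of_mul_le_mul_right h1 (ha i0)
  refine ⟨μ0, ⟨hμ0pos, hμ0sum, prop_of_eig μ0 ρ hμ0sum hμ0eig⟩, ?_⟩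
  -- uniqueness
  rintro ν ⟨hνpos, hνsum, hνeq⟩
  have hμ0prop := prop_of_eig μ0 ρ hμ0sum hμ0eig
  set lν := (∑ i, G.mulVec ν i) + τ with hlνdef
  set lμ := (∑ i, G.mulVec μ0 i) + τ with hlμdef
  have heν : A.mulVec ν = lν • ν := eig_of_prop ν hνeq
  have heμ : A.mulVec μ0 = lμ • μ0 := eig_of_prop μ0 hμ0prop
  have hll : lν = lμ :=
    le_antisymm (cmp ν μ0 lν lμ hνpos hμ0pos heν heμ)
      (cmp μ0 ν lμ lν hμ0pos hνpos heμ heν)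
  obtain ⟨i1, _, hi1⟩ := Finset.exists_mem_eq_inf' hne (fun i => ν i / μ0 i)
  set sc := Finset.univ.inf' hne fun i => ν i / μ0 i with hscdef
  have hzge : ∀ j, sc * μ0 j ≤ ν j := by
    intro j
    have h1 : sc ≤ ν j / μ0 j := Finset.inf'_le (fun i => ν i / μ0 i) (Finset.mem_univ j)
    exact (le_div_iff₀ (hμ0pos j)).mp h1
  have hsci1 : sc * μ0 i1 = ν i1 := by
    rw [hi1]; exact div_mul_cancel₀ _ (hμ0pos i1).ne'
  set z := ν - sc • μ0 with hzdef2
  have hz0 : ∀ j, 0 ≤ z j := by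
    intro j
    have : z j = ν j - sc * μ0 j := by simp [hzdef2]
    rw [this]; linarith [hzge j]
  have hzi1 : z i1 = 0 := by
    have : z i1 = ν i1 - sc * μ0 i1 := by simp [hzdef2]
    rw [this, hsci1, sub_self]
  have hAz : A.mulVec z = lν • z := by
    rw [hzdef2, Matrix.mulVec_sub, Matrix.mulVec_smul, heν, heμ, hll, smul_sub,
      smul_comm sc lμ μ0]
  have hzz : z = 0 := by
    by_contra hzz
    obtain ⟨j0, hj0⟩ : ∃ j0, 0 < z j0 := by
      by_contra h
      push_neg at h
      exact hzz (funext fun j => le_antisymm (h j) (hz0 j))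
    have hpos := mulVec_pos' P hP z hz0 j0 hj0 i1
    have heq : P.mulVec z = (1 + lν) ^ m • z := by
      rw [hPdef]; exact eig_onePow' A z lν hAz m
    rw [heq] at hpos
    simp only [Pi.smul_apply, smul_eq_mul, hzi1, mul_zero] at hpos
    exact lt_irrefl 0 hpos
  have hνeq' : ν = sc • μ0 := by
    have := sub_eq_zero.mp hzz
    exact this
  have hsc1 : sc = 1 := by
    have h1 : ∑ i, ν i = ∑ i, sc * μ0 i := by
      rw [hνeq']; simp
    rw [← Finset.mul_sum, hμ0sum, mul_one, hνsum] at h1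
    exact h1.symm
  rw [hνeq', hsc1, one_smul]
end

section
/- Let G be an n×n real matrix, λ₁ ∈ ℝ a simple root of the characteristic polynomial of G (i.e. of algebraic multiplicity one), and μ ∈ ℝⁿ an eigenvector of G for λ₁ with all entries strictly positive and ∑_i μ_i = 1. Suppose every other complex root z of the characteristic polynomial of G satisfies Re z < λ₁. Let W ⊆ ℝⁿ be the sum of the generalized eigenspaces of G (viewed over ℂ, intersected with ℝⁿ) for eigenvalues other than λ₁, so that ℝⁿ = ℝμ ⊕ W, and let X₀ = cμ + w with c > 0 and w ∈ W. Then there exists T such that for all t ≥ T the total ∑_i (exp(tG)X₀)_i is strictly positive, and the normalized vector p(t) = exp(tG)X₀ / (∑_i (exp(tG)X₀)_i) converges to μ as t → ∞. -/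
open Filter Topology

open NormedSpace in
/-- `mulVec` of a matrix exponential, as a `tsum`. -/
lemma exp_mulVec_tsum {n : ℕ} {𝕜 : Type*} [RCLike 𝕜]
    (M : Matrix (Fin n) (Fin n) 𝕜) (v : Fin n → 𝕜) :
    (exp M).mulVec v = ∑' k : ℕ, ((k.factorial : ℝ))⁻¹ • (M ^ k).mulVec v := by
  letI : SeminormedRing (Matrix (Fin n) (Fin n) 𝕜) := Matrix.linftyOpSemiNormedRing
  letI : NormedRing (Matrix (Fin n) (Fin n) 𝕜) := Matrix.linftyOpNormedRing
  letI : NormedAlgebra ℝ (Matrix (Fin n) (Fin n) 𝕜) := Matrix.linftyOpNormedAlgebra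
  let φ : Matrix (Fin n) (Fin n) 𝕜 →ₗ[ℝ] (Fin n → 𝕜) :=
    { toFun := fun A => A.mulVec v
      map_add' := fun A B => Matrix.add_mulVec A B v
      map_smul' := fun r A => by
        ext i
        simp [Matrix.mulVec, dotProduct, Finset.smul_sum, smul_mul_assoc] }
  have hφ : Continuous φ := by
    apply LinearMap.continuous_of_finiteDimensional
  have := ContinuousLinearMap.map_tsum ⟨φ, hφ⟩ (expSeries_summable' (𝕂 := ℝ) M)
  rw [exp_eq_tsum ℝ]
  simpa [φ, Matrix.smul_mulVec] using this

open NormedSpace in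
/-- Exponential applied to an eigenvector. -/
lemma exp_mulVec_eigenvector {n : ℕ} (G : Matrix (Fin n) (Fin n) ℝ) (lam₁ : ℝ)
    (μ : Fin n → ℝ) (hμeig : G.mulVec μ = lam₁ • μ) (t : ℝ) :
    (exp (t • G)).mulVec μ = Real.exp (t * lam₁) • μ := by
  have hpow : ∀ k : ℕ, (G ^ k).mulVec μ = lam₁ ^ k • μ := by
    intro k
    induction k with
    | zero => simp
    | succ k ih =>
      rw [pow_succ, ← Matrix.mulVec_mulVec, hμeig, Matrix.mulVec_smul, ih,
        smul_smul, pow_succ, mul_comm]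
  rw [exp_mulVec_tsum]
  have h1 : ∀ k : ℕ, ((k.factorial : ℝ))⁻¹ • ((t • G) ^ k).mulVec μ
      = (((k.factorial : ℝ))⁻¹ • (t * lam₁) ^ k) • μ := by
    intro k
    rw [smul_pow, Matrix.smul_mulVec, hpow k, smul_smul, smul_smul]
    congr 1
    simp only [smul_eq_mul]
    ring
  simp_rw [h1]
  have hsum : Summable fun k : ℕ => ((k.factorial : ℝ))⁻¹ • (t * lam₁) ^ k :=
    expSeries_summable' (𝕂 := ℝ) (t * lam₁)
  rw [Summable.tsum_smul_const hsum]
  congr 1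
  rw [Real.exp_eq_exp_ℝ, exp_eq_tsum ℝ]

open NormedSpace in
lemma exp_map_ofReal {n : ℕ} (M : Matrix (Fin n) (Fin n) ℝ) :
    (exp M).map (Complex.ofReal ·) = exp (M.map (Complex.ofReal ·)) := by
  have hc : Continuous (Complex.ofRealAm.mapMatrix (m := Fin n)) := by
    apply continuous_pi; intro i; apply continuous_pi; intro j
    exact Complex.continuous_ofReal.comp ((continuous_apply j).comp (continuous_apply i))
  exact open scoped Matrix.Norms.Operator in map_exp (Complex.ofRealAm.mapMatrix (m := Fin n)) hc M

open NormedSpace in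
lemma exp_smul_one_complex {n : ℕ} (c : ℂ) :
    exp (c • (1 : Matrix (Fin n) (Fin n) ℂ)) = Complex.exp c • 1 := by
  have halg : Continuous (algebraMap ℂ (Matrix (Fin n) (Fin n) ℂ)) := by
    have h : (algebraMap ℂ (Matrix (Fin n) (Fin n) ℂ)) = fun c : ℂ =>
        c • (1 : Matrix (Fin n) (Fin n) ℂ) := by
      funext c; exact (Algebra.algebraMap_eq_smul_one c)
    rw [h]
    exact continuous_id.smul continuous_const
  have h2 : exp ((algebraMap ℂ (Matrix (Fin n) (Fin n) ℂ)) c)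
      = algebraMap ℂ (Matrix (Fin n) (Fin n) ℂ) (exp c) := by
    exact open scoped Matrix.Norms.Operator in
      (map_exp ((Algebra.ofId ℂ (Matrix (Fin n) (Fin n) ℂ)).restrictScalars ℝ) halg c).symm
  rw [← Algebra.algebraMap_eq_smul_one c, h2,
    ← Complex.exp_eq_exp_ℂ, Algebra.algebraMap_eq_smul_one]

/-- polynomial times decaying exponential tends to zero -/
lemma pow_mul_exp_decay (k : ℕ) {a : ℝ} (ha : a < 0) :
    Tendsto (fun t : ℝ => t ^ k * Real.exp (a * t)) atTop (𝓝 0) := by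
  have h1 : Tendsto (fun t : ℝ => (-a) * t) atTop atTop :=
    Tendsto.const_mul_atTop (by linarith) tendsto_id
  have h2 := (Real.tendsto_pow_mul_exp_neg_atTop_nhds_zero k).comp h1
  have h3 := h2.const_mul (((-a) ^ k)⁻¹)
  rw [mul_zero] at h3
  refine h3.congr fun t => ?_
  simp only [Function.comp_apply]
  rw [mul_pow]
  have hk : ((-a) ^ k : ℝ) ≠ 0 := pow_ne_zero _ (by linarith)
  field_simp

open NormedSpace in
/-- Decay on a generalized eigenspace with real part below `lam₁`. -/
lemma gen_eigenspace_decay {n : ℕ} (A : Matrix (Fin n) (Fin n) ℂ) (lam₁ : ℝ) (z : ℂ)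
    (hz : z.re < lam₁) (x : Fin n → ℂ) (K : ℕ)
    (hx : ((A - z • 1) ^ K).mulVec x = 0) :
    Tendsto (fun t : ℝ => Real.exp (-(t * lam₁)) • (exp (t • A)).mulVec x)
      atTop (𝓝 0) := by
  set N : Matrix (Fin n) (Fin n) ℂ := A - z • 1 with hN
  have hA : ∀ t : ℝ, t • A = ((t : ℂ) * z) • (1 : Matrix (Fin n) (Fin n) ℂ) + t • N := by
    intro t
    have h1 : ((t : ℂ) * z) • (1 : Matrix (Fin n) (Fin n) ℂ)
        = t • (z • (1 : Matrix (Fin n) (Fin n) ℂ)) := by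
      rw [← Complex.real_smul, smul_assoc]
    rw [hN, smul_sub, h1]
    abel
  have hNpow : ∀ k : ℕ, K ≤ k → (N ^ k).mulVec x = 0 := by
    intro k hk
    have h : N ^ k = N ^ (k - K) * N ^ K := by
      rw [← pow_add]; congr 1; omega
    rw [h, ← Matrix.mulVec_mulVec, hx, Matrix.mulVec_zero]
  have hsplit : ∀ t : ℝ, (exp (t • A)).mulVec x
      = ∑ k ∈ Finset.range K,
          ((Complex.exp (t * z) * (((k.factorial : ℝ))⁻¹ * t ^ k)) • (N ^ k).mulVec x) := by
    intro t
    rw [hA t]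
    rw [Matrix.exp_add_of_commute _ _ ((Commute.one_left (t • N)).smul_left _)]
    rw [exp_smul_one_complex, smul_mul_assoc, one_mul, Matrix.smul_mulVec]
    rw [exp_mulVec_tsum]
    have hterm : ∀ k : ℕ, ((k.factorial : ℝ))⁻¹ • ((t • N) ^ k).mulVec x
        = ((((k.factorial : ℝ))⁻¹ * t ^ k : ℝ) : ℂ) • (N ^ k).mulVec x := by
      intro k
      rw [smul_pow, Matrix.smul_mulVec, smul_smul]
      exact (algebraMap_smul ℂ (((k.factorial : ℝ))⁻¹ * t ^ k) ((N ^ k).mulVec x)).symm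
    simp_rw [hterm]
    rw [tsum_eq_sum (s := Finset.range K)]
    · rw [Finset.smul_sum]
      apply Finset.sum_congr rfl
      intro k _
      rw [smul_smul]
      congr 1
      push_cast
      ring
    · intro k hk
      rw [hNpow k (by simpa using hk), smul_zero]
  have hterms : ∀ k : ℕ, Tendsto (fun t : ℝ =>
      (((Real.exp (-(t * lam₁)) : ℝ) : ℂ) * Complex.exp (t * z)
        * (((k.factorial : ℝ))⁻¹ * t ^ k)) • (N ^ k).mulVec x) atTop (𝓝 0) := by
    intro k
    have hscal : Tendsto (fun t : ℝ =>
        (((Real.exp (-(t * lam₁)) : ℝ) : ℂ) * Complex.exp (t * z)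
          * (((k.factorial : ℝ))⁻¹ * t ^ k))) atTop (𝓝 0) := by
      rw [tendsto_zero_iff_norm_tendsto_zero]
      have heq : ∀ᶠ t : ℝ in atTop,
          ‖(((Real.exp (-(t * lam₁)) : ℝ) : ℂ) * Complex.exp (t * z)
            * (((k.factorial : ℝ))⁻¹ * t ^ k))‖
          = ((k.factorial : ℝ))⁻¹ * (t ^ k * Real.exp ((z.re - lam₁) * t)) := by
        filter_upwards [eventually_ge_atTop (0 : ℝ)] with t ht
        rw [norm_mul, norm_mul]
        have h1 : ‖(((Real.exp (-(t * lam₁)) : ℝ)) : ℂ)‖ = Real.exp (-(t * lam₁)) := by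
          rw [Complex.norm_real, Real.norm_eq_abs, abs_of_pos (Real.exp_pos _)]
        have h2 : ‖Complex.exp ((t : ℂ) * z)‖ = Real.exp (t * z.re) := by
          rw [Complex.norm_exp]
          congr 1
          simp [Complex.mul_re]
        have h3 : ‖((((k.factorial : ℝ))⁻¹ : ℝ) : ℂ) * (t : ℂ) ^ k‖
            = ((k.factorial : ℝ))⁻¹ * t ^ k := by
          rw [norm_mul, norm_pow, Complex.norm_real, Complex.norm_real, Real.norm_eq_abs,
            Real.norm_eq_abs, abs_of_nonneg (by positivity : (0:ℝ) ≤ ((k.factorial : ℝ))⁻¹),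
            abs_of_nonneg ht]
        rw [h1, h2, h3, ← Real.exp_add]
        ring_nf
      have hlim : Tendsto (fun t : ℝ =>
          ((k.factorial : ℝ))⁻¹ * (t ^ k * Real.exp ((z.re - lam₁) * t))) atTop (𝓝 0) := by
        have := (pow_mul_exp_decay k (a := z.re - lam₁) (by linarith)).const_mul
          (((k.factorial : ℝ))⁻¹)
        simpa using this
      exact hlim.congr' (heq.mono fun t h => h.symm)
    simpa using hscal.smul_const ((N ^ k).mulVec x)
  have hcomb := tendsto_finset_sum (Finset.range K) (fun k _ => hterms k)
  simp only [Finset.sum_const_zero] at hcomb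
  refine hcomb.congr fun t => ?_
  rw [hsplit t, Finset.smul_sum]
  apply Finset.sum_congr rfl
  intro k _
  have e1 : Real.exp (-(t * lam₁)) •
        ((Complex.exp (t * z) * (((k.factorial : ℝ))⁻¹ * t ^ k)) • (N ^ k).mulVec x)
      = (((Real.exp (-(t * lam₁)) : ℝ) : ℂ)
          * (Complex.exp (t * z) * (((k.factorial : ℝ))⁻¹ * t ^ k))) • (N ^ k).mulVec x := by
    calc Real.exp (-(t * lam₁)) •
          ((Complex.exp (t * z) * (((k.factorial : ℝ))⁻¹ * t ^ k)) • (N ^ k).mulVec x)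
        = (((Real.exp (-(t * lam₁)) : ℝ) : ℂ)) •
          ((Complex.exp (t * z) * (((k.factorial : ℝ))⁻¹ * t ^ k)) • (N ^ k).mulVec x) :=
          (algebraMap_smul ℂ _ _).symm
      _ = _ := smul_smul _ _ _
  rw [e1]
  congr 1
  ring

open NormedSpace Module in
/-- Decay on the sum of non-dominant generalized eigenspaces. -/
lemma isup_decay {n : ℕ} (A : Matrix (Fin n) (Fin n) ℂ) (lam₁ : ℝ)
    (hroot : ∀ z : ℂ, z ≠ (lam₁ : ℂ) →
      Module.End.HasEigenvalue (Matrix.toLin' A) z → z.re < lam₁)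
    (x : Fin n → ℂ)
    (hx : x ∈ ⨆ (z : ℂ) (_ : z ≠ (lam₁ : ℂ)),
      Module.End.maxGenEigenspace (Matrix.toLin' A) z) :
    Tendsto (fun t : ℝ => Real.exp (-(t * lam₁)) • (exp (t • A)).mulVec x)
      atTop (𝓝 0) := by
  have key : ∀ (M : Matrix (Fin n) (Fin n) ℂ), Matrix.toLinAlgEquiv' M = Matrix.toLin' M := by
    intro M; ext v i; rfl
  have hzeroC : Tendsto (fun t : ℝ =>
      Real.exp (-(t * lam₁)) • (exp (t • A)).mulVec (0 : Fin n → ℂ)) atTop (𝓝 0) := by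
    simp only [Matrix.mulVec_zero, smul_zero]
    exact tendsto_const_nhds
  refine Submodule.iSup_induction (motive := fun y => Tendsto (fun t : ℝ =>
      Real.exp (-(t * lam₁)) • (exp (t • A)).mulVec y) atTop (𝓝 0)) _ hx ?_ hzeroC ?_
  · intro z y hy
    by_cases hz : z ≠ (lam₁ : ℂ)
    · rw [iSup_pos hz] at hy
      rcases (Module.End.mem_maxGenEigenspace _ _ _).mp hy with ⟨K, hK⟩
      by_cases hy0 : y = 0
      · subst hy0; exact hzeroC
      have heig : Module.End.HasEigenvalue (Matrix.toLin' A) z := by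
        clear hy
        induction K generalizing y with
        | zero => simp only [pow_zero, Module.End.one_apply] at hK; exact absurd hK hy0
        | succ K ih =>
          by_cases hy1 : (Matrix.toLin' A - z • 1) y = 0
          · have h7 := hy1
            rw [LinearMap.sub_apply, LinearMap.smul_apply, Module.End.one_apply,
              sub_eq_zero] at h7
            exact Module.End.hasEigenvalue_of_hasEigenvector
              ⟨Module.End.mem_eigenspace_iff.mpr h7, hy0⟩
          · refine ih ((Matrix.toLin' A - z • 1) y) ?_ hy1
            rw [← Module.End.mul_apply, ← pow_succ]
            exact hK
      have hzre : z.re < lam₁ := hroot z hz heig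
      have hmat : ((A - z • 1) ^ K).mulVec y = 0 := by
        have h5 : Matrix.toLinAlgEquiv' ((A - z • 1) ^ K)
            = (Matrix.toLin' A - z • 1) ^ K := by
          rw [map_pow, map_sub, map_smul, map_one, key]
        have h6 : Matrix.toLinAlgEquiv' ((A - z • 1) ^ K) y = 0 := by rw [h5]; exact hK
        rw [Matrix.toLinAlgEquiv'_apply] at h6
        exact h6
      exact gen_eigenspace_decay A lam₁ z hzre y K hmat
    · rw [iSup_neg hz] at hy
      have h8 : y = 0 := by simpa using hy
      subst h8; exact hzeroC
  · intro y₁ y₂ h₁ h₂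
    have h9 := h₁.add h₂
    rw [add_zero] at h9
    refine h9.congr fun t => ?_
    rw [Matrix.mulVec_add, smul_add]

open NormedSpace

/-- Let `G` be an `n × n` real matrix, `λ₁ ∈ ℝ` a simple root of the
characteristic polynomial of `G`, and `μ` an eigenvector of `G` for `λ₁` with strictly
positive entries summing to `1`.  Suppose every other complex root `z` of the
characteristic polynomial satisfies `Re z < λ₁`.  Let `W` be the set of real vectors
whose complexification lies in the sum of the generalized eigenspaces of `G` (over `ℂ`)
for eigenvalues other than `λ₁`, and let `X₀ = c•μ + w` with `c > 0`, `w ∈ W`.  Then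
eventually the total `∑ i, (exp(tG)X₀) i` is strictly positive, and the normalized
vector `exp(tG)X₀ / ∑ i, (exp(tG)X₀) i` converges to `μ` as `t → ∞`. -/
theorem stmt1 (n : ℕ) (G : Matrix (Fin n) (Fin n) ℝ) (lam₁ : ℝ)
    (hsimple : Polynomial.rootMultiplicity lam₁ G.charpoly = 1)
    (μ : Fin n → ℝ) (hμpos : ∀ i, 0 < μ i) (hμsum : (∑ i, μ i) = 1)
    (hμeig : G.mulVec μ = lam₁ • μ)
    (hdom : ∀ z : ℂ, (G.charpoly.map (algebraMap ℝ ℂ)).IsRoot z → z ≠ (lam₁ : ℂ) →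
      z.re < lam₁)
    (W : Set (Fin n → ℝ))
    (hW : W = {x : Fin n → ℝ |
      (fun i => (x i : ℂ)) ∈
        ⨆ (z : ℂ) (_ : z ≠ (lam₁ : ℂ)),
          Module.End.maxGenEigenspace (Matrix.toLin' (G.map (algebraMap ℝ ℂ))) z})
    (X₀ : Fin n → ℝ) (c : ℝ) (hc : 0 < c) (w : Fin n → ℝ) (hw : w ∈ W)
    (hX₀ : X₀ = c • μ + w) :
    ∃ T : ℝ, (∀ t ≥ T, 0 < ∑ i, (NormedSpace.exp (t • G)).mulVec X₀ i) ∧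
      Tendsto (fun t : ℝ =>
          (∑ i, (NormedSpace.exp (t • G)).mulVec X₀ i)⁻¹ •
            (NormedSpace.exp (t • G)).mulVec X₀)
        atTop (𝓝 μ) := by
  set Gc : Matrix (Fin n) (Fin n) ℂ := G.map (algebraMap ℝ ℂ) with hGc
  have hroot : ∀ z : ℂ, z ≠ (lam₁ : ℂ) →
      Module.End.HasEigenvalue (Matrix.toLin' Gc) z → z.re < lam₁ := by
    intro z hz heig
    apply hdom z _ hz
    have hmin : (minpoly ℂ (Matrix.toLin' Gc)).IsRoot z :=
      Module.End.hasEigenvalue_iff_isRoot.mp heig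
    have hdvd : minpoly ℂ (Matrix.toLin' Gc) ∣ (Matrix.toLin' Gc).charpoly :=
      LinearMap.minpoly_dvd_charpoly _
    have hcp : (Matrix.toLin' Gc).charpoly = G.charpoly.map (algebraMap ℝ ℂ) := by
      rw [← Matrix.charpoly_map G (algebraMap ℝ ℂ), ← hGc,
        ← LinearMap.charpoly_toMatrix (Matrix.toLin' Gc) (Pi.basisFun ℂ (Fin n))]
      congr 1
      rw [← Matrix.toLin_eq_toLin', LinearMap.toMatrix_toLin]
    rw [← hcp]
    exact hmin.dvd hdvd
  have hwC : (fun i => (w i : ℂ)) ∈ ⨆ (z : ℂ) (_ : z ≠ (lam₁ : ℂ)),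
      Module.End.maxGenEigenspace (Matrix.toLin' Gc) z := by
    rw [hW] at hw; exact hw
  have hdecayC := isup_decay Gc lam₁ hroot _ hwC
  have hcompat : ∀ t : ℝ, ∀ i,
      ((exp (t • Gc)).mulVec (fun i => (w i : ℂ))) i
        = (((exp (t • G)).mulVec w i : ℝ) : ℂ) := by
    intro t i
    have h1 : t • Gc = (t • G).map (Complex.ofReal ·) := by
      ext i j
      simp [hGc, Matrix.map_apply, Complex.real_smul]
    rw [h1, ← exp_map_ofReal]
    exact (RingHom.map_mulVec Complex.ofRealHom (exp (t • G)) w i).symm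
  have hdecay : Tendsto (fun t : ℝ =>
      Real.exp (-(t * lam₁)) • (exp (t • G)).mulVec w) atTop (𝓝 0) := by
    rw [tendsto_pi_nhds]
    intro i
    have hi := (tendsto_pi_nhds.mp hdecayC) i
    have hre := (Complex.continuous_re.tendsto 0).comp hi
    simp only [Complex.zero_re] at hre
    refine hre.congr fun t => ?_
    simp only [Function.comp_apply, Pi.smul_apply, hcompat t i]
    rw [Complex.real_smul, ← Complex.ofReal_mul, Complex.ofReal_re]
    rfl
  have hmain : Tendsto (fun t : ℝ =>
      Real.exp (-(t * lam₁)) • (exp (t • G)).mulVec X₀) atTop (𝓝 (c • μ)) := by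
    have h10 := tendsto_const_nhds (x := c • μ) (f := atTop (α := ℝ)) |>.add hdecay
    rw [add_zero] at h10
    refine h10.congr fun t => ?_
    rw [hX₀, Matrix.mulVec_add, smul_add]
    congr 1
    rw [Matrix.mulVec_smul, exp_mulVec_eigenvector G lam₁ μ hμeig t, smul_smul, smul_smul]
    congr 1
    rw [mul_comm (Real.exp (-(t * lam₁))) c, mul_assoc, ← Real.exp_add]
    simp
  have hsum : Tendsto (fun t : ℝ =>
      Real.exp (-(t * lam₁)) * ∑ i, (exp (t • G)).mulVec X₀ i) atTop (𝓝 c) := by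
    have hcont : Continuous fun v : Fin n → ℝ => ∑ i, v i :=
      continuous_finset_sum _ fun i _ => continuous_apply i
    have h11 := (hcont.tendsto (c • μ)).comp hmain
    have hval : (∑ i, (c • μ) i) = c := by
      simp only [Pi.smul_apply, smul_eq_mul, ← Finset.mul_sum, hμsum, mul_one]
    rw [hval] at h11
    refine h11.congr fun t => ?_
    simp only [Function.comp_apply, Pi.smul_apply, smul_eq_mul, Finset.mul_sum]
  have hev : ∀ᶠ t : ℝ in atTop,
      0 < Real.exp (-(t * lam₁)) * ∑ i, (exp (t • G)).mulVec X₀ i :=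
    hsum.eventually (eventually_gt_nhds hc)
  have hev' : ∀ᶠ t : ℝ in atTop, 0 < ∑ i, (exp (t • G)).mulVec X₀ i := by
    filter_upwards [hev] with t ht
    nlinarith [Real.exp_pos (-(t * lam₁))]
  obtain ⟨T, hT⟩ := eventually_atTop.mp hev'
  refine ⟨T, hT, ?_⟩
  have htend := (hsum.inv₀ (ne_of_gt hc)).smul hmain
  rw [smul_smul, inv_mul_cancel₀ (ne_of_gt hc), one_smul] at htend
  refine htend.congr fun t => ?_
  rw [smul_smul]
  congr 1
  rw [mul_inv, mul_comm (Real.exp (-(t * lam₁)))⁻¹, mul_assoc,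
    inv_mul_cancel₀ (ne_of_gt (Real.exp_pos _)), mul_one]
end

section
/- Let G be an n×n real matrix, let I ⊆ ℝ be an open interval, and let X : I → ℝⁿ be differentiable with X'(t) = G X(t) for all t ∈ I. Suppose N(t) := ∑_i X_i(t) ≠ 0 for all t ∈ I. Then p(t) := X(t)/N(t) is differentiable on I and satisfies the proportion equation p'(t) = G p(t) − (eᵀ G p(t)) p(t) for all t ∈ I, where e = (1,…,1)ᵀ ∈ ℝⁿ. -/
/-- Let `G` be an `n × n` real matrix, `I = (a, b)` an open interval,
and `X : I → ℝⁿ` differentiable with `X'(t) = G X(t)` on `I`.  If `N(t) = ∑ i, X i (t)`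
is nonzero on `I`, then `p(t) = X(t) / N(t)` is differentiable on `I` and satisfies the
proportion equation `p'(t) = G p(t) − (eᵀ G p(t)) p(t)` for all `t ∈ I`. -/
theorem stmt3 (n : ℕ) (G : Matrix (Fin n) (Fin n) ℝ) (a b : ℝ)
    (X : ℝ → Fin n → ℝ)
    (hX : ∀ t ∈ Set.Ioo a b, HasDerivAt X (G.mulVec (X t)) t)
    (hN : ∀ t ∈ Set.Ioo a b, (∑ i, X t i) ≠ 0)
    (p : ℝ → Fin n → ℝ) (hp : ∀ t, p t = (∑ i, X t i)⁻¹ • X t) :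
    ∀ t ∈ Set.Ioo a b,
      HasDerivAt p (G.mulVec (p t) - (∑ i, G.mulVec (p t) i) • p t) t := by
  intro t ht
  have hXt := hX t ht
  have hNne := hN t ht
  have hNt : HasDerivAt (fun s => ∑ i, X s i) (∑ i, G.mulVec (X t) i) t := by
    apply HasDerivAt.fun_sum
    intro i _
    exact (hasDerivAt_pi.mp hXt) i
  have hinv := hNt.fun_inv hNne
  have h := hinv.fun_smul hXt
  have hfun : (fun s => (∑ i, X s i)⁻¹ • X s) = p := by
    funext s; rw [hp s]
  rw [hfun] at h
  refine h.congr_deriv (Eq.symm ?_)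
  rw [hp t, Matrix.mulVec_smul]
  set N := ∑ i, X t i
  set S := ∑ i, G.mulVec (X t) i
  have hsum : (∑ i, (N⁻¹ • G.mulVec (X t)) i) = N⁻¹ * S := by
    simp [Finset.mul_sum, S]
  rw [hsum]
  funext i
  simp only [Pi.sub_apply, Pi.smul_apply, Pi.add_apply, smul_eq_mul]
  field_simp
  ring
end

section
/- Let G be an n×n real matrix and let p : ℝ → ℝⁿ be differentiable with p'(t) = G p(t) − (eᵀ G p(t)) p(t) for all t, where e = (1,…,1)ᵀ. If eᵀ p(0) = 1, then eᵀ p(t) = 1 for all t ∈ ℝ; that is, the affine hyperplane {x : ∑_i x_i = 1} is invariant under the flow of the proportion equation. -/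
/-- Let `G` be an `n × n` real matrix and `p : ℝ → ℝⁿ` differentiable
with `p'(t) = G p(t) − (eᵀ G p(t)) p(t)` for all `t`.  If `eᵀ p(0) = 1`, then
`eᵀ p(t) = 1` for all `t`: the hyperplane `{x : ∑ i, x i = 1}` is invariant under the
flow of the proportion equation. -/
theorem stmt4 (n : ℕ) (G : Matrix (Fin n) (Fin n) ℝ) (p : ℝ → Fin n → ℝ)
    (hp : ∀ t : ℝ, HasDerivAt p (G.mulVec (p t) - (∑ i, G.mulVec (p t) i) • p t) t)
    (h0 : (∑ i, p 0 i) = 1) :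
    ∀ t : ℝ, (∑ i, p t i) = 1 := by
  set a : ℝ → ℝ := fun t => ∑ i, G.mulVec (p t) i with ha_def
  set s : ℝ → ℝ := fun t => ∑ i, p t i with hs_def
  -- derivative of s
  have hcomp : ∀ t i, HasDerivAt (fun u => p u i)
      (G.mulVec (p t) i - a t * p t i) t := by
    intro t i
    have := hasDerivAt_pi.1 (hp t) i
    simpa [Pi.sub_apply, smul_eq_mul] using this
  have hs : ∀ t, HasDerivAt s (a t * (1 - s t)) t := by
    intro t
    have h := HasDerivAt.fun_sum (fun i (_ : i ∈ Finset.univ) => hcomp t i)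
    refine h.congr_deriv ?_
    rw [Finset.sum_sub_distrib, ← Finset.mul_sum]
    simp [hs_def, ha_def]
    ring
  -- continuity of a
  have hpc : Continuous p := by
    rw [continuous_iff_continuousAt]; exact fun t => (hp t).continuousAt
  have hac : Continuous a := by
    apply continuous_finset_sum
    intro i _
    simp only [Matrix.mulVec, dotProduct]
    apply continuous_finset_sum
    intro j _
    exact continuous_const.mul ((continuous_apply j).comp hpc)
  -- integrating factor
  set A : ℝ → ℝ := fun t => ∫ u in (0:ℝ)..t, a u with hA_def
  have hA : ∀ t, HasDerivAt A (a t) t := fun t =>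
    intervalIntegral.integral_hasDerivAt_right (hac.intervalIntegrable 0 t)
      hac.aestronglyMeasurable.stronglyMeasurableAtFilter hac.continuousAt
  set F : ℝ → ℝ := fun t => (s t - 1) * Real.exp (A t) with hF_def
  have hF : ∀ t, HasDerivAt F 0 t := by
    intro t
    have h := ((hs t).sub_const 1).mul ((hA t).exp)
    refine h.congr_deriv ?_
    ring
  have hconst : ∀ t, F t = F 0 :=
    fun t => is_const_of_deriv_eq_zero (fun x => (hF x).differentiableAt)
      (fun x => (hF x).deriv) t 0
  intro t
  have h1 : F 0 = 0 := by simp [hF_def, hs_def, h0]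
  have h2 : F t = 0 := (hconst t).trans h1
  have h3 : s t - 1 = 0 := by
    rcases mul_eq_zero.1 h2 with h | h
    · exact h
    · exact absurd h (Real.exp_ne_zero _)
  have : s t = 1 := by linarith
  simpa [hs_def] using this
end

section
/- Let G be an n×n real matrix with nonnegative off-diagonal entries and κ ∈ ℝ such that every column of G sums to κ. Let p₀ ∈ ℝⁿ have nonnegative entries with ∑_i (p₀)_i = 1, and set p(t) = exp(t(G − κI)) p₀ for t ≥ 0. Then for every t ≥ 0 the vector p(t) has nonnegative entries and ∑_i p_i(t) = 1; moreover p is differentiable and satisfies the proportion equation p'(t) = G p(t) − (eᵀ G p(t)) p(t) for all t ≥ 0, where e = (1,…,1)ᵀ. -/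
open NormedSpace

section aux

variable {n : ℕ}

private lemma stmt7_summable (M : Matrix (Fin n) (Fin n) ℝ) :
    Summable (fun k : ℕ => ((Nat.factorial k : ℝ))⁻¹ • M ^ k) := by
  letI : SeminormedRing (Matrix (Fin n) (Fin n) ℝ) := Matrix.linftyOpSemiNormedRing
  letI : NormedRing (Matrix (Fin n) (Fin n) ℝ) := Matrix.linftyOpNormedRing
  letI : NormedAlgebra ℝ (Matrix (Fin n) (Fin n) ℝ) := Matrix.linftyOpNormedAlgebra
  exact NormedSpace.expSeries_summable' M

private lemma stmt7_entry (M : Matrix (Fin n) (Fin n) ℝ) (i j : Fin n) :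
    exp M i j = ∑' k : ℕ, ((Nat.factorial k : ℝ))⁻¹ * (M ^ k) i j := by
  have h1 := stmt7_summable M
  have h2 : Summable (fun k : ℕ => (((Nat.factorial k : ℝ))⁻¹ • M ^ k) i) := Pi.summable.mp h1 i
  rw [exp_eq_tsum ℝ]
  beta_reduce
  erw [tsum_apply h1, tsum_apply h2]
  exact tsum_congr fun k => by simp [Matrix.smul_apply]

private lemma stmt7_entry_summable (M : Matrix (Fin n) (Fin n) ℝ) (i j : Fin n) :
    Summable (fun k : ℕ => ((Nat.factorial k : ℝ))⁻¹ * (M ^ k) i j) := by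
  have h2 : Summable (fun k : ℕ => (((Nat.factorial k : ℝ))⁻¹ • M ^ k) i) :=
    Pi.summable.mp (stmt7_summable M) i
  exact (Pi.summable.mp h2 j).congr fun k => by simp [Matrix.smul_apply]

private lemma stmt7_pow_nonneg (M : Matrix (Fin n) (Fin n) ℝ)
    (h : ∀ i j, 0 ≤ M i j) : ∀ (k : ℕ) (i j : Fin n), 0 ≤ (M ^ k) i j := by
  intro k
  induction k with
  | zero =>
    intro i j
    rw [pow_zero]
    by_cases hij : i = j <;> simp [Matrix.one_apply, hij]
  | succ k ih =>
    intro i j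
    rw [pow_succ, Matrix.mul_apply]
    exact Finset.sum_nonneg fun l _ => mul_nonneg (ih i l) (h l j)

private lemma stmt7_exp_nonneg (M : Matrix (Fin n) (Fin n) ℝ)
    (h : ∀ i j, 0 ≤ M i j) (i j : Fin n) : 0 ≤ exp M i j := by
  rw [stmt7_entry]
  exact tsum_nonneg fun k => mul_nonneg (by positivity) (stmt7_pow_nonneg M h k i j)

private lemma stmt7_pow_colsum (M : Matrix (Fin n) (Fin n) ℝ)
    (h : ∀ j, ∑ i, M i j = 0) :
    ∀ (k : ℕ) (j : Fin n), ∑ i, (M ^ k) i j = if k = 0 then 1 else 0 := by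
  intro k
  induction k with
  | zero =>
    intro j
    simp [Matrix.one_apply]
  | succ k ih =>
    intro j
    have hl : ∀ l, ∑ i, M i l * (M ^ k) l j = ∑ i, M i l * (M ^ k) l j := fun _ => rfl
    simp only [pow_succ', Matrix.mul_apply]
    rw [Finset.sum_comm]
    have : ∀ l, ∑ i, M i l * (M ^ k) l j = 0 := fun l => by
      rw [← Finset.sum_mul, h l, zero_mul]
    simp [this]

private lemma stmt7_exp_colsum (M : Matrix (Fin n) (Fin n) ℝ)
    (h : ∀ j, ∑ i, M i j = 0) (j : Fin n) : ∑ i, exp M i j = 1 := by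
  have hsum : ∀ i, Summable fun k : ℕ => ((Nat.factorial k : ℝ))⁻¹ * (M ^ k) i j :=
    fun i => stmt7_entry_summable M i j
  calc ∑ i, exp M i j = ∑ i, ∑' k : ℕ, ((Nat.factorial k : ℝ))⁻¹ * (M ^ k) i j := by
        exact Finset.sum_congr rfl fun i _ => stmt7_entry M i j
    _ = ∑' k : ℕ, ∑ i, ((Nat.factorial k : ℝ))⁻¹ * (M ^ k) i j :=
        (Summable.tsum_finsetSum fun i _ => hsum i).symm
    _ = ∑' k : ℕ, ((Nat.factorial k : ℝ))⁻¹ * (if k = 0 then 1 else 0) := by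
        refine tsum_congr fun k => ?_
        rw [← Finset.mul_sum, stmt7_pow_colsum M h k j]
    _ = 1 := by
        rw [tsum_eq_single 0 (fun k hk => by simp [hk])]
        simp

private lemma stmt7_exp_smul_one (r : ℝ) :
    exp (r • (1 : Matrix (Fin n) (Fin n) ℝ)) = Real.exp r • 1 := by
  letI : SeminormedRing (Matrix (Fin n) (Fin n) ℝ) := Matrix.linftyOpSemiNormedRing
  letI : NormedRing (Matrix (Fin n) (Fin n) ℝ) := Matrix.linftyOpNormedRing
  letI : NormedAlgebra ℝ (Matrix (Fin n) (Fin n) ℝ) := Matrix.linftyOpNormedAlgebra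
  rw [← Algebra.algebraMap_eq_smul_one, ← Algebra.algebraMap_eq_smul_one,
    Real.exp_eq_exp_ℝ]
  exact (NormedSpace.algebraMap_exp_comm r).symm

private lemma stmt7_hasDerivAt (A : Matrix (Fin n) (Fin n) ℝ) (p₀ : Fin n → ℝ) (t : ℝ) :
    HasDerivAt (fun u : ℝ => (exp (u • A)).mulVec p₀) ((A * exp (t • A)).mulVec p₀) t := by
  letI : SeminormedRing (Matrix (Fin n) (Fin n) ℝ) := Matrix.linftyOpSemiNormedRing
  letI : NormedRing (Matrix (Fin n) (Fin n) ℝ) := Matrix.linftyOpNormedRing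
  letI : NormedAlgebra ℝ (Matrix (Fin n) (Fin n) ℝ) := Matrix.linftyOpNormedAlgebra
  have hD : HasDerivAt (fun u : ℝ => exp (u • A)) (A * exp (t • A)) t :=
    hasDerivAt_exp_smul_const' A t
  let L : Matrix (Fin n) (Fin n) ℝ →ₗ[ℝ] (Fin n → ℝ) :=
    { toFun := fun M => M.mulVec p₀
      map_add' := fun M N => Matrix.add_mulVec M N p₀
      map_smul' := fun r M => Matrix.smul_mulVec r M p₀ }
  exact L.toContinuousLinearMap.hasFDerivAt.comp_hasDerivAt t hD

end aux

/-- Let `G` be an `n × n` real matrix with nonnegative off-diagonal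
entries whose columns all sum to `κ`, let `p₀` be a probability vector, and set
`p(t) = exp(t(G − κI)) p₀`.  Then for every `t ≥ 0` the vector `p(t)` has nonnegative
entries summing to `1`, and `p` satisfies the proportion equation
`p'(t) = G p(t) − (eᵀ G p(t)) p(t)` for all `t ≥ 0`. -/
theorem stmt7 (n : ℕ) (G : Matrix (Fin n) (Fin n) ℝ) (κ : ℝ)
    (hoff : ∀ i j : Fin n, i ≠ j → 0 ≤ G i j)
    (hcol : ∀ j : Fin n, (∑ i, G i j) = κ)
    (p₀ : Fin n → ℝ) (hp₀ : ∀ i, 0 ≤ p₀ i) (hp₀sum : (∑ i, p₀ i) = 1)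
    (p : ℝ → Fin n → ℝ)
    (hp : ∀ t : ℝ, p t =
      (NormedSpace.exp (t • (G - κ • (1 : Matrix (Fin n) (Fin n) ℝ)))).mulVec p₀) :
    ∀ t : ℝ, 0 ≤ t →
      (∀ i, 0 ≤ p t i) ∧ (∑ i, p t i) = 1 ∧
      HasDerivAt p (G.mulVec (p t) - (∑ i, G.mulVec (p t) i) • p t) t := by
  have hpE : p = fun t => (exp (t • (G - κ • 1))).mulVec p₀ := funext hp
  subst hpE
  set A : Matrix (Fin n) (Fin n) ℝ := G - κ • 1 with hA
  have hAcol : ∀ j, ∑ i, A i j = 0 := by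
    intro j
    simp only [hA, Matrix.sub_apply, Matrix.smul_apply, Matrix.one_apply, smul_eq_mul,
      Finset.sum_sub_distrib, hcol j, mul_ite, mul_one, mul_zero, Finset.sum_ite_eq,
      Finset.mem_univ, if_true, sub_self, Finset.sum_ite_eq']
  intro t ht
  have htAcol : ∀ j, ∑ i, (t • A) i j = 0 := fun j => by
    simp [Matrix.smul_apply, ← Finset.mul_sum, hAcol j]
  -- sum equals one
  have hsum1 : ∑ i, (exp (t • A)).mulVec p₀ i = 1 := by
    simp only [Matrix.mulVec, dotProduct]
    rw [Finset.sum_comm]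
    calc ∑ j, ∑ i, exp (t • A) i j * p₀ j
        = ∑ j, (∑ i, exp (t • A) i j) * p₀ j := by
          exact Finset.sum_congr rfl fun j _ => (Finset.sum_mul ..).symm
      _ = ∑ j, p₀ j := by
          refine Finset.sum_congr rfl fun j _ => ?_
          rw [stmt7_exp_colsum _ htAcol j, one_mul]
      _ = 1 := hp₀sum
  -- nonnegativity
  set c : ℝ := ∑ i, |A i i| with hc
  have hcnn : ∀ i, |A i i| ≤ c := fun i =>
    Finset.single_le_sum (f := fun i => |A i i|) (fun i _ => abs_nonneg _) (Finset.mem_univ i)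
  have hN : ∀ i j, 0 ≤ (t • A + (t * c) • 1) i j := by
    intro i j
    by_cases hij : i = j
    · subst hij
      simp only [Matrix.add_apply, Matrix.smul_apply, Matrix.one_apply_eq, smul_eq_mul, mul_one]
      have : 0 ≤ A i i + c := by
        have := hcnn i
        have := neg_abs_le (A i i)
        linarith
      nlinarith
    · simp only [Matrix.add_apply, Matrix.smul_apply, Matrix.one_apply_ne hij, smul_eq_mul,
        mul_zero, add_zero]
      have hAij : A i j = G i j := by simp [hA, Matrix.one_apply_ne hij]
      rw [hAij]
      exact mul_nonneg ht (hoff i j hij)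
  have hdecomp : exp (t • A) = Real.exp (-(t * c)) • exp (t • A + (t * c) • 1) := by
    have hcomm : Commute (t • A + (t * c) • 1) ((-(t * c)) • (1 : Matrix (Fin n) (Fin n) ℝ)) :=
      (Commute.one_right _).smul_right _
    have heq : t • A = (t • A + (t * c) • 1) + (-(t * c)) • (1 : Matrix (Fin n) (Fin n) ℝ) := by
      module
    conv_lhs => rw [heq]
    rw [Matrix.exp_add_of_commute _ _ hcomm, stmt7_exp_smul_one,
      Matrix.mul_smul, mul_one]
  have hnonneg : ∀ i, 0 ≤ (exp (t • A)).mulVec p₀ i := by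
    intro i
    simp only [Matrix.mulVec, dotProduct]
    refine Finset.sum_nonneg fun j _ => mul_nonneg ?_ (hp₀ j)
    rw [hdecomp]
    simp only [Matrix.smul_apply, smul_eq_mul]
    exact mul_nonneg (Real.exp_nonneg _) (stmt7_exp_nonneg _ hN i j)
  refine ⟨hnonneg, hsum1, ?_⟩
  -- the coefficient
  have hκ : ∑ i, G.mulVec ((exp (t • A)).mulVec p₀) i = κ := by
    simp only [Matrix.mulVec, dotProduct]
    rw [Finset.sum_comm]
    calc ∑ j, ∑ i, G i j * (fun j => ∑ l, exp (t • A) j l * p₀ l) j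
        = ∑ j, κ * (∑ l, exp (t • A) j l * p₀ l) := by
          refine Finset.sum_congr rfl fun j _ => ?_
          rw [← Finset.sum_mul, hcol j]
      _ = κ := by
          rw [← Finset.mul_sum]
          have := hsum1
          simp only [Matrix.mulVec, dotProduct] at this
          rw [this, mul_one]
  -- derivative
  have hD2 := stmt7_hasDerivAt A p₀ t
  have hfinal : (A * exp (t • A)).mulVec p₀
      = G.mulVec ((exp (t • A)).mulVec p₀)
        - (∑ i, G.mulVec ((exp (t • A)).mulVec p₀) i) • (exp (t • A)).mulVec p₀ := by
    rw [hκ, ← Matrix.mulVec_mulVec, hA, Matrix.sub_mulVec, Matrix.smul_mulVec,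
      Matrix.one_mulVec]
  exact hfinal ▸ hD2
end
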